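/- Decomposition theorem: a local rule f : Q^V → Q is number-conserving if and only if there exist a split function h and a perturbation g such that f = h + g. Moreover, this decomposition is unique: if h₁ + g₁ = h₂ + g₂ with h₁, h₂ split functions and g₁, g₂ perturbations, then h₁ = h₂ and g₁ = g₂. -/
import Mathlib


/-- Directions of the von Neumann neighborhood: `none` is the zero vector,
`some (k, b)` is `e_k` if `b = true` and `-e_k` if `b = false`. -/
abbrev Dir (d : ℕ) := Option (Fin d × Bool)

/-- The opposite direction. -/
def negDir {d : ℕ} : Dir d → Dir d
  | none => none
  | some (k, b) => some (k, !b)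

/-- The integer vector corresponding to a direction. -/
def dirVec {d : ℕ} : Dir d → Fin d → ℤ
  | none => fun _ => 0
  | some (k, b) => fun j => if j = k then (if b then 1 else -1) else 0

/-- The `d`-dimensional torus with side lengths `n k`. -/
abbrev Cell (d : ℕ) (n : Fin d → ℕ) := ∀ k, ZMod (n k)

/-- Translation of a cell by an integer vector (componentwise mod `n k`). -/
def cellAdd {d : ℕ} {n : Fin d → ℕ} (i : Cell d n) (v : Fin d → ℤ) : Cell d n :=
  fun k => i k + (v k : ZMod (n k))

/-- The von Neumann neighborhood of a cell, as a set of cells. -/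
def nbhdSet {d : ℕ} {n : Fin d → ℕ} (i : Cell d n) : Set (Cell d n) :=
  {c | ∃ v : Dir d, c = cellAdd i (dirVec v)}

/-- The neighborhood configuration of cell `i` in configuration `x`. -/
def nbhd {d : ℕ} {n : Fin d → ℕ} {α : Type*} (x : Cell d n → α) (i : Cell d n) :
    Dir d → α :=
  fun v => x (cellAdd i (dirVec v))

/-- The monomer `M_{v:q}`: value `q` in direction `v`, zero elsewhere. -/
def monomer {d : ℕ} (v : Dir d) (q : ℝ) : Dir d → ℝ :=
  fun u => if u = v then q else 0

/-- The dimer `D(u:p, w:q)`: value `p` in direction `u`, `q` in direction `w`,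
zero elsewhere. -/
def dimer {d : ℕ} (u : Dir d) (p : ℝ) (w : Dir d) (q : ℝ) : Dir d → ℝ :=
  fun v => if v = u then p else if v = w then q else 0

/-- `f` is number-conserving: on every torus with all side lengths `> 4` the
induced global map preserves the sum of states, for `Q`-valued configurations. -/
def NumberConserving {d : ℕ} (Q : Set ℝ) (f : (Dir d → ℝ) → ℝ) : Prop :=
  ∀ (n : Fin d → ℕ) (hn : ∀ k, 4 < n k) (x : Cell d n → ℝ), (∀ i, x i ∈ Q) →
    haveI : ∀ k, NeZero (n k) := fun k => ⟨by have := hn k; omega⟩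
    ∑ i, f (nbhd x i) = ∑ i, x i

/-- Split function: (S1), (S2) and (S3). -/
def SplitFunction {d : ℕ} (Q : Set ℝ) (h : (Dir d → ℝ) → ℝ) : Prop :=
  (∀ (v : Dir d) (q : ℝ), q ∈ Q → h (monomer v q) ∈ Q) ∧
  (∀ q : ℝ, q ∈ Q → ∑ v : Dir d, h (monomer v q) = q) ∧
  (∀ N : Dir d → ℝ, (∀ v, N v ∈ Q) → h N = ∑ v : Dir d, h (monomer v (N v)))

/-- Perturbation: vanishes on monomers (P1), and its global map sends every
configuration to a zero-sum configuration (P2). -/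
def Perturbation {d : ℕ} (Q : Set ℝ) (g : (Dir d → ℝ) → ℝ) : Prop :=
  (∀ (v : Dir d) (q : ℝ), q ∈ Q → g (monomer v q) = 0) ∧
  ∀ (n : Fin d → ℕ) (hn : ∀ k, 4 < n k) (x : Cell d n → ℝ), (∀ i, x i ∈ Q) →
    haveI : ∀ k, NeZero (n k) := fun k => ⟨by have := hn k; omega⟩
    ∑ i, g (nbhd x i) = 0

/-- The defining condition of the set `Ω` of admissible pairs of directions. -/
def OmegaPair {d : ℕ} (u w : Dir d) : Prop :=
  (u = none ∧ w ≠ none) ∨ (u ≠ none ∧ w ≠ none ∧ u ≠ w ∧ u ≠ negDir w)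

lemma monomer_zero {d : ℕ} (v : Dir d) : monomer v (0:ℝ) = fun _ => 0 := by
  funext u; simp [monomer]

lemma monomer_mem {d : ℕ} {Q : Set ℝ} (h0 : (0:ℝ) ∈ Q) (v : Dir d) {q : ℝ} (hq : q ∈ Q) :
    ∀ u, monomer v q u ∈ Q := by
  intro u; unfold monomer; split <;> assumption

def transEquiv {d : ℕ} {n : Fin d → ℕ} (w : Fin d → ℤ) : Cell d n ≃ Cell d n where
  toFun i := cellAdd i w
  invFun i := fun k => i k - ((w k : ℤ) : ZMod (n k))
  left_inv i := by funext k; simp [cellAdd]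
  right_inv i := by funext k; simp [cellAdd]

lemma SPD_sum_translate {d : ℕ} {n : Fin d → ℕ} [∀ k, NeZero (n k)] (w : Fin d → ℤ)
    (F : Cell d n → ℝ) : ∑ i : Cell d n, F (cellAdd i w) = ∑ i, F i :=
  Fintype.sum_equiv (transEquiv w) _ _ (fun _ => rfl)

lemma SPD_sum_split {d : ℕ} {n : Fin d → ℕ} [∀ k, NeZero (n k)] {Q : Set ℝ}
    {h : (Dir d → ℝ) → ℝ}
    (hS2 : ∀ q : ℝ, q ∈ Q → ∑ v : Dir d, h (monomer v q) = q)
    (hS3 : ∀ N : Dir d → ℝ, (∀ v, N v ∈ Q) → h N = ∑ v : Dir d, h (monomer v (N v)))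
    (x : Cell d n → ℝ) (hx : ∀ i, x i ∈ Q) :
    ∑ i, h (nbhd x i) = ∑ i, x i := by
  have h1 : ∀ i, h (nbhd x i) = ∑ v : Dir d, h (monomer v (x (cellAdd i (dirVec v)))) :=
    fun i => hS3 (nbhd x i) (fun v => hx _)
  calc ∑ i, h (nbhd x i) = ∑ i, ∑ v : Dir d, h (monomer v (x (cellAdd i (dirVec v)))) := by
        simp only [h1]
    _ = ∑ v : Dir d, ∑ i, h (monomer v (x (cellAdd i (dirVec v)))) := Finset.sum_comm
    _ = ∑ v : Dir d, ∑ i, h (monomer v (x i)) := by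
        refine Finset.sum_congr rfl fun v _ => ?_
        exact SPD_sum_translate (dirVec v) (fun j => h (monomer v (x j)))
    _ = ∑ i, ∑ v : Dir d, h (monomer v (x i)) := Finset.sum_comm
    _ = ∑ i, x i := Finset.sum_congr rfl fun i _ => hS2 (x i) (hx i)

lemma zmod_small_inj {m : ℕ} (hm : 4 < m) {a b : ℤ} (ha : a = -1 ∨ a = 0 ∨ a = 1)
    (hb : b = -1 ∨ b = 0 ∨ b = 1) (h : ((a : ZMod m) = (b : ZMod m))) : a = b := by
  have h2 : ((a - b : ℤ) : ZMod m) = 0 := by push_cast; rw [h]; ring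
  have h3 : (m : ℤ) ∣ (a - b) := (ZMod.intCast_zmod_eq_zero_iff_dvd _ _).mp h2
  have h4 : a - b = 0 := Int.eq_zero_of_abs_lt_dvd h3 (by
    rcases ha with rfl|rfl|rfl <;> rcases hb with rfl|rfl|rfl <;> simp <;> omega)
  omega

lemma dirVec_range {d : ℕ} (v : Dir d) (k : Fin d) :
    dirVec v k = -1 ∨ dirVec v k = 0 ∨ dirVec v k = 1 := by
  rcases v with _ | ⟨j, b⟩ <;> simp only [dirVec]
  · simp
  · split
    · cases b <;> simp
    · simp

lemma dirVec_inj {d : ℕ} {v u : Dir d} (h : ∀ k, dirVec v k = dirVec u k) : v = u := by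
  match v, u with
  | none, none => rfl
  | none, some (j, b) => have := h j; cases b <;> simp [dirVec] at this
  | some (j, b), none => have := h j; cases b <;> simp [dirVec] at this
  | some (j, b), some (j', b') =>
    by_cases hjj : j = j'
    · subst hjj
      have := h j
      cases b <;> cases b' <;> simp [dirVec] at this ⊢ <;> omega
    · have h1 := h j
      have h2 := h j'
      simp [dirVec, hjj, Ne.symm hjj] at h1 h2
      cases b <;> simp at h1 <;> omega

/-- Decomposition theorem: a local rule is number-conserving iff it is the sum
of a split function and a perturbation; moreover the decomposition is unique
(on `Q`-valued neighborhood configurations). -/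
theorem split_perturb_decomposition
    (d : ℕ) (hd : 1 ≤ d) (Q : Set ℝ) (h0 : (0 : ℝ) ∈ Q)
    (f : (Dir d → ℝ) → ℝ)
    (hrule : ∀ N : Dir d → ℝ, (∀ v, N v ∈ Q) → f N ∈ Q) :
    (NumberConserving Q f ↔
      ∃ h g : (Dir d → ℝ) → ℝ, SplitFunction Q h ∧ Perturbation Q g ∧
        ∀ N : Dir d → ℝ, (∀ v, N v ∈ Q) → f N = h N + g N) ∧
    (∀ h₁ g₁ h₂ g₂ : (Dir d → ℝ) → ℝ,
      SplitFunction Q h₁ → Perturbation Q g₁ →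
      SplitFunction Q h₂ → Perturbation Q g₂ →
      (∀ N : Dir d → ℝ, (∀ v, N v ∈ Q) → h₁ N + g₁ N = h₂ N + g₂ N) →
      ∀ N : Dir d → ℝ, (∀ v, N v ∈ Q) → h₁ N = h₂ N ∧ g₁ N = g₂ N) := by
  classical
  have uniq : ∀ h₁ g₁ h₂ g₂ : (Dir d → ℝ) → ℝ,
      SplitFunction Q h₁ → Perturbation Q g₁ → SplitFunction Q h₂ → Perturbation Q g₂ →
      (∀ N : Dir d → ℝ, (∀ v, N v ∈ Q) → h₁ N + g₁ N = h₂ N + g₂ N) →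
      ∀ N : Dir d → ℝ, (∀ v, N v ∈ Q) → h₁ N = h₂ N ∧ g₁ N = g₂ N := by
    intro h₁ g₁ h₂ g₂ hs1 hp1 hs2 hp2 heq N hN
    have hm : ∀ v : Dir d, h₁ (monomer v (N v)) = h₂ (monomer v (N v)) := by
      intro v
      have e := heq (monomer v (N v)) (monomer_mem h0 v (hN v))
      rw [hp1.1 v _ (hN v), hp2.1 v _ (hN v)] at e
      linarith
    have hh : h₁ N = h₂ N := by
      rw [hs1.2.2 N hN, hs2.2.2 N hN]
      exact Finset.sum_congr rfl fun v _ => hm v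
    exact ⟨hh, by have := heq N hN; linarith⟩
  refine ⟨⟨?_, ?_⟩, uniq⟩
  · -- forward direction
    intro hNC
    have hn5 : ∀ k : Fin d, 4 < (fun _ : Fin d => 5) k := fun _ => by norm_num
    haveI : ∀ k : Fin d, NeZero ((fun _ : Fin d => 5) k) := fun _ => ⟨by norm_num⟩
    have f0 : f (fun _ => 0) = 0 := by
      have e := hNC (fun _ => 5) hn5 (fun _ => 0) (fun _ => h0)
      rw [Finset.sum_congr rfl
          (fun i _ => show f (nbhd (fun _ => (0:ℝ)) i) = f (fun _ => 0) from rfl),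
        Finset.sum_const, Finset.sum_const, smul_zero, nsmul_eq_mul,
        Finset.card_univ] at e
      rcases mul_eq_zero.mp e with hc | hf
      · have : 0 < Fintype.card (Cell d (fun _ : Fin d => 5)) := Fintype.card_pos
        exact absurd hc (by positivity)
      · exact hf
    have hS2f : ∀ q : ℝ, q ∈ Q → ∑ v : Dir d, f (monomer v q) = q := by
      intro q hq
      set x : Cell d (fun _ => 5) → ℝ := fun i => if i = (fun _ => 0) then q else 0 with hxdef
      have hx : ∀ i, x i ∈ Q := by
        intro i; simp only [hxdef]; split
        · exact hq
        · exact h0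
      have e := hNC (fun _ => 5) hn5 x hx
      set iv : Dir d → Cell d (fun _ => 5) := fun v k => -((dirVec v k : ℤ) : ZMod 5) with hivdef
      have hcell : ∀ (i : Cell d (fun _ => 5)) (u : Dir d),
          cellAdd i (dirVec u) = (fun _ => 0) ↔ i = iv u := by
        intro i u
        simp [cellAdd, hivdef, funext_iff, add_eq_zero_iff_eq_neg]
      have hivinj : Function.Injective iv := by
        intro v u hvu
        apply dirVec_inj
        intro k
        have hk := congrFun hvu k
        simp only [hivdef, neg_inj] at hk
        exact zmod_small_inj (hn5 k) (dirVec_range v k) (dirVec_range u k) hk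
      have key1 : ∀ v : Dir d, nbhd x (iv v) = monomer v q := by
        intro v; funext u
        show x (cellAdd (iv v) (dirVec u)) = monomer v q u
        by_cases huv : u = v
        · subst huv
          rw [(hcell _ _).mpr rfl]
          simp [hxdef, monomer]
        · have hne : cellAdd (iv v) (dirVec u) ≠ (fun _ => 0) := by
            intro hcon
            exact huv (hivinj ((hcell _ _).mp hcon)).symm
          simp [hxdef, hne, monomer, huv]
      have key2 : ∀ i : Cell d (fun _ => 5), i ∉ Finset.univ.image iv →
          nbhd x i = fun _ => 0 := by
        intro i hi; funext u
        show x (cellAdd i (dirVec u)) = 0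
        have hne : cellAdd i (dirVec u) ≠ (fun _ => 0) := by
          intro hcon
          exact hi (Finset.mem_image.mpr ⟨u, Finset.mem_univ u, ((hcell _ _).mp hcon).symm⟩)
        simp [hxdef, hne]
      have eL : ∑ i, f (nbhd x i) = ∑ v : Dir d, f (monomer v q) := by
        rw [← Finset.sum_subset (Finset.subset_univ (Finset.univ.image iv))
            (fun i _ hi => by rw [key2 i hi, f0])]
        rw [Finset.sum_image (fun v _ u _ hvu => hivinj hvu)]
        exact Finset.sum_congr rfl fun v _ => by rw [key1 v]
      have eR : ∑ i, x i = q := by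
        simp only [hxdef]
        exact Fintype.sum_ite_eq' (fun _ => 0) (fun _ => q)
      rw [eL, eR] at e
      exact e
    have hmono : ∀ (v : Dir d) (q : ℝ),
        (∑ u : Dir d, f (monomer u (monomer v q u))) = f (monomer v q) := by
      intro v q
      have hterm : ∀ u : Dir d, f (monomer u (monomer v q u)) =
          if u = v then f (monomer v q) else 0 := by
        intro u
        by_cases huv : u = v
        · subst huv; simp [monomer]
        · rw [if_neg huv]
          have h1 : monomer v q u = 0 := if_neg huv
          rw [h1, monomer_zero, f0]
      rw [Finset.sum_congr rfl fun u _ => hterm u]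
      exact Fintype.sum_ite_eq' v (fun _ => f (monomer v q))
    have hSplit : SplitFunction Q (fun N => ∑ v : Dir d, f (monomer v (N v))) := by
      refine ⟨?_, ?_, ?_⟩
      · intro v q hq
        show (∑ u : Dir d, f (monomer u (monomer v q u))) ∈ Q
        rw [hmono v q]
        exact hrule _ (monomer_mem h0 v hq)
      · intro q hq
        show ∑ v : Dir d, ∑ u : Dir d, f (monomer u (monomer v q u)) = q
        rw [Finset.sum_congr rfl fun v _ => hmono v q]
        exact hS2f q hq
      · intro N hN
        show ∑ v : Dir d, f (monomer v (N v)) =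
          ∑ v : Dir d, ∑ u : Dir d, f (monomer u (monomer v (N v) u))
        exact (Finset.sum_congr rfl fun v _ => hmono v (N v)).symm
    refine ⟨fun N => ∑ v : Dir d, f (monomer v (N v)),
      fun N => f N - ∑ v : Dir d, f (monomer v (N v)), hSplit, ⟨?_, ?_⟩, ?_⟩
    · intro v q hq
      show f (monomer v q) - ∑ u : Dir d, f (monomer u (monomer v q u)) = 0
      rw [hmono v q]; ring
    · intro n hn x hx
      haveI : ∀ k, NeZero (n k) := fun k => ⟨by have := hn k; omega⟩
      show ∑ i, (f (nbhd x i) - ∑ v : Dir d, f (monomer v (nbhd x i v))) = 0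
      rw [Finset.sum_sub_distrib]
      have e1 := hNC n hn x hx
      have e2 : ∑ i, (∑ v : Dir d, f (monomer v (nbhd x i v))) = ∑ i, x i :=
        SPD_sum_split (Q := Q) (h := fun N => ∑ v : Dir d, f (monomer v (N v)))
          hSplit.2.1 hSplit.2.2 x hx
      rw [e1, e2]; ring
    · intro N hN
      show f N = (∑ v : Dir d, f (monomer v (N v))) +
        (f N - ∑ v : Dir d, f (monomer v (N v)))
      ring
  · -- backward direction
    rintro ⟨h, g, hs, hp, heq⟩
    intro n hn x hx
    haveI : ∀ k, NeZero (n k) := fun k => ⟨by have := hn k; omega⟩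
    have e : ∀ i : Cell d n, f (nbhd x i) = h (nbhd x i) + g (nbhd x i) :=
      fun i => heq _ (fun v => hx _)
    calc ∑ i, f (nbhd x i) = ∑ i, (h (nbhd x i) + g (nbhd x i)) :=
          Finset.sum_congr rfl fun i _ => e i
      _ = (∑ i, h (nbhd x i)) + ∑ i, g (nbhd x i) := Finset.sum_add_distrib
      _ = (∑ i, x i) + 0 := by rw [SPD_sum_split hs.2.1 hs.2.2 x hx, hp.2 n hn x hx]
      _ = ∑ i, x i := add_zero _
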